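/- Let (b_p), (c_p), (d_p) be sequences of integers indexed by the primes. The family of ring endomorphisms of ℤ[x]/(x⁴) determined by ψ_p(x) = b_p x + c_p x² + d_p x³ is a filtered λ-ring structure if and only if all of the following hold: (i) b_p ≡ 0 (mod p) for all primes p; (ii) c₂ ≡ 1 (mod 2) and c_p ≡ 0 (mod p) for all primes p > 2; (iii) (b_q² − b_q)·c_p = (b_p² − b_p)·c_q for all primes p, q; (iv) (b_q³ − b_q)·d_p = (b_p³ − b_p)·d_q + 2c_p c_q (b_p − b_q) for all primes p, q; (v) d_p ≡ 0 (mod p) for all primes p ≠ 3, and d₃ ≡ 1 (mod 3). -/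

import Mathlib

open Polynomial

noncomputable section

/-- The truncated polynomial ring `ℤ[x]/(xⁿ)`. -/
abbrev TP (n : ℕ) : Type := Polynomial ℤ ⧸ Ideal.span {(X : Polynomial ℤ) ^ n}

/-- The class of `x` in `ℤ[x]/(xⁿ)`. -/
def xx (n : ℕ) : TP n := Ideal.Quotient.mk _ (X : Polynomial ℤ)

/-- A filtered λ-ring structure on `ℤ[x]/(xⁿ)`, presented (via Wilkerson's theorem) as a
family of Adams operations `ψ p`, indexed by the primes `p`: each `ψ p` is a ring
endomorphism preserving the filtration ideal `(x)`, they pairwise commute, and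
`ψ p r ≡ r ^ p (mod p)`. -/
structure AdamsFamily (n : ℕ) : Type where
  ψ : Nat.Primes → (TP n →+* TP n)
  maps_ideal : ∀ (p : Nat.Primes), ∀ a ∈ Ideal.span {xx n}, ψ p a ∈ Ideal.span {xx n}
  comm : ∀ p q : Nat.Primes, (ψ p).comp (ψ q) = (ψ q).comp (ψ p)
  frob : ∀ (p : Nat.Primes) (a : TP n),
    ψ p a - a ^ (p : ℕ) ∈ Ideal.span {((p : ℕ) : TP n)}

/-- Isomorphism of filtered λ-ring structures on `ℤ[x]/(xⁿ)`: a filtration-preserving ring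
automorphism intertwining the Adams operations. -/
def AdamsIso {n : ℕ} (R S : AdamsFamily n) : Prop :=
  ∃ σ : TP n ≃+* TP n,
    (Ideal.span {xx n}).map σ.toRingHom = Ideal.span {xx n} ∧
    ∀ p : Nat.Primes, σ.toRingHom.comp (R.ψ p) = (S.ψ p).comp σ.toRingHom

/-- The prime 2 as an element of `Nat.Primes`. -/
def P2 : Nat.Primes := ⟨2, Nat.prime_two⟩

/-- The prime 3 as an element of `Nat.Primes`. -/
def P3 : Nat.Primes := ⟨3, Nat.prime_three⟩

/-! A ring endomorphism of `ℤ[x]/(xⁿ)` is substitution of its value at `x`, and two ring maps out of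
`ℤ[x]/(xⁿ)` agree as soon as they agree on `x`. So both axioms need only be checked at `x`: the
congruence `ψ_p(a) ≡ aᵖ` because `a ↦ ψ_p(a)` and `a ↦ aᵖ` are both ring maps into the quotient
modulo `p`, and commutation because `ψ_p ∘ ψ_q` is determined by `ψ_p(ψ_q(x))`. At `x` the congruence
compares the coefficients of `ψ_p(x)` with those of `xᵖ`, giving (i), (ii) and (v), while composing two
cubics modulo `x⁴` and comparing the coefficients of `x²` and `x³` gives (iii) and (iv). -/

namespace TP

variable {n : ℕ}

theorem xx_pow_self (n : ℕ) : xx n ^ n = 0 := by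
  rw [xx, ← map_pow, Ideal.Quotient.eq_zero_iff_mem]
  exact Ideal.mem_span_singleton_self _

theorem pow_eq_zero_of_mem_span_xx {y : TP n} (hy : y ∈ Ideal.span {xx n}) : y ^ n = 0 := by
  obtain ⟨t, rfl⟩ := Ideal.mem_span_singleton'.mp hy
  rw [mul_pow, xx_pow_self, mul_zero]

theorem ringHom_ext {S : Type*} [Semiring S] {f g : TP n →+* S} (h : f (xx n) = g (xx n)) :
    f = g :=
  Ideal.Quotient.ringHom_ext (Polynomial.ringHom_ext' (RingHom.ext_int _ _) h)

def lift {S : Type*} [CommRing S] (y : S) (hy : y ^ n = 0) : TP n →+* S :=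
  Ideal.Quotient.lift _ (aeval y).toRingHom fun a ha => by
    obtain ⟨k, rfl⟩ := Ideal.mem_span_singleton'.mp ha
    simp [hy]

@[simp]
theorem lift_xx {S : Type*} [CommRing S] (y : S) (hy : y ^ n = 0) : lift y hy (xx n) = y := by
  simp [lift, xx]

theorem dvd_coeff_of_mk_mem_span {m : ℤ} {f : ℤ[X]}
    (h : Ideal.Quotient.mk (Ideal.span {X ^ n}) f ∈ Ideal.span {(m : TP n)}) {i : ℕ} (hi : i < n) :
    m ∣ f.coeff i := by
  obtain ⟨t, ht⟩ := Ideal.mem_span_singleton'.mp h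
  obtain ⟨g, rfl⟩ := Ideal.Quotient.mk_surjective t
  have hdvd : X ^ n ∣ f - g * C m := by
    rw [← Ideal.mem_span_singleton, ← Ideal.Quotient.eq, map_mul, ← ht]
    exact congrArg _ (eq_intCast ((Ideal.Quotient.mk (Ideal.span {(X : ℤ[X]) ^ n})).comp C) m).symm
  have hi := X_pow_dvd_iff.mp hdvd i hi
  rw [coeff_sub, coeff_mul_C, sub_eq_zero] at hi
  exact ⟨g.coeff i, by rw [hi, mul_comm]⟩

theorem sub_pow_mem_span_of_xx {p : ℕ} [Fact p.Prime] {ψ : TP n →+* TP n}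
    (hx : ψ (xx n) - xx n ^ p ∈ Ideal.span {(p : TP n)}) (a : TP n) :
    ψ a - a ^ p ∈ Ideal.span {(p : TP n)} := by
  set I := Ideal.span {(p : TP n)}
  rw [← Ideal.Quotient.eq]
  rcases subsingleton_or_nontrivial (TP n ⧸ I) with _ | _
  · exact Subsingleton.elim _ _
  have : CharP (TP n ⧸ I) p := (CharP.charP_iff_prime_eq_zero Fact.out).mpr <| by
    rw [← map_natCast (Ideal.Quotient.mk I), Ideal.Quotient.eq_zero_iff_mem]
    exact Ideal.mem_span_singleton_self _
  have hfrob : (Ideal.Quotient.mk I).comp ψ = (frobenius (TP n ⧸ I) p).comp (Ideal.Quotient.mk I) :=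
    ringHom_ext (Ideal.Quotient.eq.mpr hx)
  exact RingHom.congr_fun hfrob a

theorem exists_adamsFamily_iff {g : Nat.Primes → TP n}
    (hg : ∀ p, g p ∈ Ideal.span {xx n}) :
    (∃ R : AdamsFamily n, ∀ p, R.ψ p (xx n) = g p) ↔
      (∀ p : Nat.Primes, g p - xx n ^ (p : ℕ) ∈ Ideal.span {((p : ℕ) : TP n)}) ∧
      ∀ p q, lift (g p) (pow_eq_zero_of_mem_span_xx (hg p)) (g q) =
        lift (g q) (pow_eq_zero_of_mem_span_xx (hg q)) (g p) := by
  constructor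
  · rintro ⟨R, hR⟩
    have hψ : ∀ p, R.ψ p = lift (g p) (pow_eq_zero_of_mem_span_xx (hg p)) :=
      fun p => ringHom_ext (by rw [hR, lift_xx])
    refine ⟨fun p => hR p ▸ R.frob p (xx n), fun p q => ?_⟩
    rw [← hψ, ← hψ, ← hR, ← hR]
    exact RingHom.congr_fun (R.comm p q) (xx n)
  · rintro ⟨hfrob, hcomm⟩
    refine ⟨⟨fun p => lift (g p) (pow_eq_zero_of_mem_span_xx (hg p)), fun p a ha => ?_,
      fun p q => ringHom_ext ?_, fun p => ?_⟩, fun p => lift_xx _ (pow_eq_zero_of_mem_span_xx (hg p))⟩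
    · obtain ⟨t, rfl⟩ := Ideal.mem_span_singleton'.mp ha
      rw [map_mul, lift_xx]
      exact Ideal.mul_mem_left _ _ (hg p)
    · simpa using hcomm p q
    · have : Fact (p : ℕ).Prime := ⟨p.2⟩
      exact sub_pow_mem_span_of_xx (by simpa using hfrob p)

def cubic (b c d : ℤ) : TP 4 := b * xx 4 + c * xx 4 ^ 2 + d * xx 4 ^ 3

theorem cubic_mem_span_xx (b c d : ℤ) : cubic b c d ∈ Ideal.span {xx 4} :=
  Ideal.mem_span_singleton'.mpr ⟨b + c * xx 4 + d * xx 4 ^ 2, by rw [cubic]; ring⟩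

theorem cubic_mem_span_intCast_iff (m b c d : ℤ) :
    cubic b c d ∈ Ideal.span {(m : TP 4)} ↔ m ∣ b ∧ m ∣ c ∧ m ∣ d := by
  constructor
  · intro h
    have hmk : cubic b c d = Ideal.Quotient.mk _ (C b * X + C c * X ^ 2 + C d * X ^ 3) := by
      simp [cubic, xx]
    rw [hmk] at h
    have hcoeff (i : ℕ) (hi : i < 4) := dvd_coeff_of_mk_mem_span h hi
    simp only [coeff_add, coeff_C_mul, coeff_X_pow, coeff_X] at hcoeff
    exact ⟨by simpa using hcoeff 1, by simpa using hcoeff 2, by simpa using hcoeff 3⟩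
  · rintro ⟨⟨b, rfl⟩, ⟨c, rfl⟩, ⟨d, rfl⟩⟩
    exact Ideal.mem_span_singleton'.mpr ⟨cubic b c d, by simp only [cubic]; push_cast; ring⟩

theorem cubic_sub_cubic (b c d b' c' d' : ℤ) :
    cubic b c d - cubic b' c' d' = cubic (b - b') (c - c') (d - d') := by
  simp only [cubic]; push_cast; ring

theorem cubic_inj {b c d b' c' d' : ℤ} :
    cubic b c d = cubic b' c' d' ↔ b = b' ∧ c = c' ∧ d = d' := by
  have := cubic_mem_span_intCast_iff 0 (b - b') (c - c') (d - d')
  simpa [← cubic_sub_cubic, sub_eq_zero] using this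

theorem cubic_sub_xx_pow {p : ℕ} (hp : p ≠ 0) (b c d : ℤ) :
    cubic b c d - xx 4 ^ p =
      cubic (b - if p = 1 then 1 else 0) (c - if p = 2 then 1 else 0) (d - if p = 3 then 1 else 0) := by
  obtain _ | _ | _ | _ | k := p
  · contradiction
  rotate_right
  · have : xx 4 ^ (k + 4) = 0 := by rw [pow_add, xx_pow_self, mul_zero]
    simp [this]
  all_goals simp only [cubic]; push_cast; ring

theorem cubic_sub_xx_pow_mem_span_iff (p : Nat.Primes) (b c d : ℤ) :
    cubic b c d - xx 4 ^ (p : ℕ) ∈ Ideal.span {((p : ℕ) : TP 4)} ↔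
      ((p : ℕ) : ℤ) ∣ b ∧ ((p : ℕ) : ℤ) ∣ c - (if (p : ℕ) = 2 then 1 else 0) ∧
        ((p : ℕ) : ℤ) ∣ d - if (p : ℕ) = 3 then 1 else 0 := by
  rw [cubic_sub_xx_pow p.2.ne_zero, ← Int.cast_natCast, cubic_mem_span_intCast_iff,
    if_neg p.2.one_lt.ne', sub_zero]

theorem lift_cubic {S : Type*} [CommRing S] (y : S) (hy : y ^ 4 = 0) (b c d : ℤ) :
    lift y hy (cubic b c d) = b * y + c * y ^ 2 + d * y ^ 3 := by
  simp [cubic]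

theorem lift_cubic_cubic (b c d b' c' d' : ℤ) (h : cubic b c d ^ 4 = 0) :
    lift (cubic b c d) h (cubic b' c' d') =
      cubic (b' * b) (b' * c + c' * b ^ 2) (b' * d + 2 * b * c * c' + d' * b ^ 3) := by
  rw [lift_cubic]
  simp only [cubic]
  push_cast
  set x := xx 4
  -- with `u = b + c x + d x²`: `u² - b² - 2bcx = x²((c + dx)² + 2bd)` and
  -- `u³ - b³ = x(c + dx)(u² + ub + b²)`, so everything dropped is `x⁴` times this cofactor
  linear_combination (c' * ((c + d * x) ^ 2 + 2 * b * d) +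
    d' * (c + d * x) * ((b + c * x + d * x ^ 2) ^ 2 + (b + c * x + d * x ^ 2) * b + b ^ 2)) *
      xx_pow_self 4

theorem lift_cubic_comm_iff (b c d b' c' d' : ℤ) (h : cubic b c d ^ 4 = 0)
    (h' : cubic b' c' d' ^ 4 = 0) :
    lift (cubic b c d) h (cubic b' c' d') = lift (cubic b' c' d') h' (cubic b c d) ↔
      (b' ^ 2 - b') * c = (b ^ 2 - b) * c' ∧
        (b' ^ 3 - b') * d = (b ^ 3 - b) * d' + 2 * c * c' * (b - b') := by
  rw [lift_cubic_cubic, lift_cubic_cubic, cubic_inj]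
  constructor
  · rintro ⟨-, h2, h3⟩
    exact ⟨by linear_combination -h2, by linear_combination -h3⟩
  · rintro ⟨h2, h3⟩
    exact ⟨mul_comm _ _, by linear_combination -h2, by linear_combination -h3⟩

end TP

theorem forall_dvd_sub_ite_iff (e : Nat.Primes → ℤ) (r : ℕ) (hr : r.Prime) :
    (∀ p : Nat.Primes, ((p : ℕ) : ℤ) ∣ e p - if (p : ℕ) = r then 1 else 0) ↔
      (∀ p : Nat.Primes, (p : ℕ) ≠ r → ((p : ℕ) : ℤ) ∣ e p) ∧ e ⟨r, hr⟩ ≡ 1 [ZMOD r] := by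
  constructor
  · intro h
    refine ⟨fun p hp => by simpa [hp] using h p, ?_⟩
    simpa [Int.modEq_comm, Int.modEq_iff_dvd] using h ⟨r, hr⟩
  · rintro ⟨hne, her⟩ p
    by_cases hp : (p : ℕ) = r
    · obtain rfl : p = ⟨r, hr⟩ := Subtype.ext hp
      simpa [Int.modEq_comm, Int.modEq_iff_dvd] using her
    · simpa [hp] using hne p hp

theorem stmt13 (b c d : Nat.Primes → ℤ) :
    (∃ R : AdamsFamily 4, ∀ p : Nat.Primes,
        R.ψ p (xx 4) =
          (b p : TP 4) * xx 4 + (c p : TP 4) * xx 4 ^ 2 + (d p : TP 4) * xx 4 ^ 3) ↔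
    ((∀ p : Nat.Primes, ((p : ℕ) : ℤ) ∣ b p) ∧
     (Int.ModEq 2 (c P2) 1 ∧ ∀ p : Nat.Primes, 2 < (p : ℕ) → ((p : ℕ) : ℤ) ∣ c p) ∧
     (∀ p q : Nat.Primes, (b q ^ 2 - b q) * c p = (b p ^ 2 - b p) * c q) ∧
     (∀ p q : Nat.Primes,
        (b q ^ 3 - b q) * d p = (b p ^ 3 - b p) * d q + 2 * c p * c q * (b p - b q)) ∧
     ((∀ p : Nat.Primes, (p : ℕ) ≠ 3 → ((p : ℕ) : ℤ) ∣ d p) ∧ Int.ModEq 3 (d P3) 1)) := by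
  refine (TP.exists_adamsFamily_iff (g := fun p => TP.cubic (b p) (c p) (d p))
    fun p => TP.cubic_mem_span_xx _ _ _).trans ?_
  simp only [TP.cubic_sub_xx_pow_mem_span_iff, TP.lift_cubic_comm_iff, forall_and,
    forall_dvd_sub_ite_iff c 2 Nat.prime_two, forall_dvd_sub_ite_iff d 3 Nat.prime_three]
  have hne_two (p : Nat.Primes) : (p : ℕ) ≠ 2 ↔ 2 < (p : ℕ) := by have := p.2.two_le; omega
  simp only [hne_two]
  exact ⟨fun ⟨⟨hb, ⟨hc, hc2⟩, hd, hd3⟩, h3, h4⟩ => ⟨hb, ⟨hc2, hc⟩, h3, h4, hd, hd3⟩,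
    fun ⟨hb, ⟨hc2, hc⟩, h3, h4, hd, hd3⟩ => ⟨⟨hb, ⟨hc, hc2⟩, hd, hd3⟩, h3, h4⟩⟩
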